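/- Let n ≥ 1, s ∈ (0,1), R > 1. Let Ω ⊂ ℝⁿ be a bounded open set with B_1 ⊆ Ω ⊆ B_R and dist(0, ∂Ω) = 1, and suppose there is p ∈ ∂Ω ∩ ∂B_1 such that for all sufficiently small t > 0 the point q_t := (1+t)p lies in ℝⁿ \ closure(Ω) with dist(q_t, ∂Ω) = t. Define F_Ω(y) := c(n,s)/(|y|ⁿ (dist(y,∂Ω))^s (2 + dist(y,∂Ω))^s) for y ∈ 𝒞Ω and 𝔠(Ω) := ∫_{𝒞Ω} F_Ω(y) dy. Let P_Ω : Ω × (ℝⁿ \ closure(Ω)) → [0,∞) satisfy: (i) P_Ω(0,q) = P_{B_1}(0,q) + ∫_{Ω \ B_1} P_Ω(y,q) P_{B_1}(0,y) dy for all q ∈ ℝⁿ \ closure(Ω); (ii) there exist c₀, c̄ > 0 with P_Ω(y,q) ≥ c₀ (dist(y,∂Ω))^s/(|y−q|ⁿ (dist(q,∂Ω))^s (1 + c̄ dist(q,∂Ω))^s) for all y ∈ Ω, q ∈ ℝⁿ \ closure(Ω); (iii) P_{B_1}(0,q) ≤ P_Ω(0,q) for all q ∈ ℝⁿ \ closure(Ω),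 and P_Ω(0,q) ≤ P_{B_R}(0,q) for all q with |q| > R. Assume that F_Ω(y) = 𝔠(Ω) P_Ω(0,y) for all y ∈ ℝⁿ \ closure(Ω). Then: (1) 𝔠(Ω) ∈ [R^{−2s}, 1]; (2) 𝔠(Ω) = 1 if and only if Ω = B_1. -/

import Mathlib

/-!
At `q_t = (1 + t) p` the distance to `∂Ω` is `|q_t| - 1`, exactly as for the unit ball, so
`F_Ω(q_t) = P_{B₁}(0, q_t) ≤ P_Ω(0, q_t)`, which gives `0 < 𝔠(Ω) ≤ 1`. Far out on the ray through
`p`, `F_Ω ≥ P_{B₁}(0, ·)` and `P_Ω(0, ·) ≤ P_{B_R}(0, ·)`, and `P_{B₁}(0, q) / P_{B_R}(0, q)` tends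
to `R^{-2s}` as `|q| → ∞`.

If `𝔠(Ω) = 1` but `Ω ≠ B₁`, then `Ω` contains a ball `K` outside the closed unit ball. At far points
`q` on the ray through `K`, identity (i) writes `F_Ω(q) - P_{B₁}(0, q)` as an integral over
`Ω \ B₁`; the Chen–Song bound on `K` makes it at least a fixed multiple of `F_Ω(q)`, while
`1 - x^s ≤ (1 - x)^s` shows that it is `O(|q|^{-s}) F_Ω(q)`.
-/

open MeasureTheory Metric Filter Set Topology

noncomputable section

/-- Euclidean space ℝⁿ. -/
abbrev En (n : ℕ) := EuclideanSpace ℝ (Fin n)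

/-- The fractional Poisson kernel of the ball `B_R(x₀)`:
`P_{B_R(x₀)}(x,y) = c (R² − |x − x₀|²)^s / ((|y − x₀|² − R²)^s |x − y|ⁿ)`. -/
def poissonBall (n : ℕ) (c s : ℝ) (x₀ : En n) (R : ℝ) (x y : En n) : ℝ :=
  c * (R ^ 2 - ‖x - x₀‖ ^ 2) ^ s / ((‖y - x₀‖ ^ 2 - R ^ 2) ^ s * ‖x - y‖ ^ (n : ℝ))

/-- The explicit Poisson-like kernel of formula (1.18) of the paper:
`F_Ω(y) = c / (|y|ⁿ dist(y,∂Ω)^s (2 + dist(y,∂Ω))^s)`. -/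
def FOm (n : ℕ) (c s : ℝ) (Ω : Set (En n)) (y : En n) : ℝ :=
  c / (‖y‖ ^ (n : ℝ) * (infDist y (frontier Ω)) ^ s * (2 + infDist y (frontier Ω)) ^ s)

theorem IsPreconnected.inter_frontier_nonempty {X : Type*} [TopologicalSpace X] {S t : Set X}
    (hS : IsPreconnected S) (hSt : (S ∩ t).Nonempty) (hSt' : (S \ t).Nonempty) :
    (S ∩ frontier t).Nonempty := by
  obtain ⟨x, hxS, hxt⟩ := hSt
  obtain ⟨y, hyS, hyt⟩ := hSt'
  by_contra h
  have h_int : ∀ z ∈ S, z ∈ closure t → z ∈ interior t := fun z hz hzc =>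
    by_contra fun hzi => h ⟨z, hz, hzc, hzi⟩
  have hS_int : S ⊆ interior t :=
    hS.subset_left_of_subset_union isOpen_interior isClosed_closure.isOpen_compl
      (disjoint_compl_right.mono_left interior_subset_closure)
      (fun z hz => (em (z ∈ closure t)).imp (h_int z hz) id)
      ⟨x, hxS, h_int x hxS (subset_closure hxt)⟩
  exact hyt (interior_subset (hS_int hyS))

theorem exists_mem_frontier_dist_le {E : Type*} [NormedAddCommGroup E] [NormedSpace ℝ E]
    {s : Set E} {x q : E} (hx : x ∈ s) (hq : q ∉ s) : ∃ z ∈ frontier s, dist q z ≤ dist q x := by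
  obtain ⟨z, hz_seg, hz⟩ := (convex_segment q x).isPreconnected.inter_frontier_nonempty
    ⟨x, right_mem_segment ℝ q x, hx⟩ ⟨q, left_mem_segment ℝ q x, hq⟩
  refine ⟨z, hz, ?_⟩
  linarith [dist_add_dist_of_mem_segment hz_seg, dist_nonneg (x := z) (y := x)]

theorem le_infDist_frontier_of_ball_subset {X : Type*} [PseudoMetricSpace X] {s : Set X}
    {y : X} {r : ℝ} (hs : (frontier s).Nonempty) (hys : ball y r ⊆ s) :
    r ≤ infDist y (frontier s) :=
  (le_infDist hs).2 fun _ hz => not_lt.1 fun hzr =>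
    hz.2 (interior_maximal hys isOpen_ball (mem_ball'.2 hzr))

theorem sub_le_infDist_of_subset_closedBall {E : Type*} [SeminormedAddCommGroup E] {s : Set E}
    {R : ℝ} (hs : s.Nonempty) (hsR : s ⊆ closedBall 0 R) (q : E) : ‖q‖ - R ≤ infDist q s :=
  (le_infDist hs).2 fun z hz => by
    rw [dist_eq_norm]
    linarith [norm_sub_norm_le q z, mem_closedBall_zero_iff.1 (hsR hz)]

theorem infDist_sphere_zero {E : Type*} [NormedAddCommGroup E] [NormedSpace ℝ E] {r : ℝ}
    {y : E} (hr : 0 < r) (hy : r ≤ ‖y‖) : infDist y (sphere 0 r) = ‖y‖ - r := by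
  have hy0 : 0 < ‖y‖ := hr.trans_le hy
  have hw : (r / ‖y‖) • y ∈ sphere (0 : E) r := by
    simp [norm_smul, abs_of_pos hr, hy0.ne']
  refine le_antisymm ((infDist_le_dist_of_mem hw).trans_eq ?_)
    ((le_infDist ⟨_, hw⟩).2 fun z hz => ?_)
  · rw [dist_eq_norm, show y - (r / ‖y‖) • y = (1 - r / ‖y‖) • y by rw [sub_smul, one_smul],
      norm_smul, Real.norm_eq_abs,
      abs_of_nonneg (by rw [sub_nonneg, div_le_one hy0]; exact hy)]
    field_simp
  · rw [dist_eq_norm]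
    linarith [norm_sub_norm_le y z, mem_sphere_zero_iff_norm.1 hz]

theorem exists_ball_subset_diff_closedBall {E : Type*} [NormedAddCommGroup E]
    [NormedSpace ℝ E] {Ω : Set E} {a : E} {r : ℝ} (hr : r ≠ 0) (hΩ : IsOpen Ω)
    (hB : ball a r ⊆ Ω) (hne : Ω ≠ ball a r) : ∃ x, ∃ ε > 0, ball x ε ⊆ Ω \ closedBall a r := by
  obtain ⟨x, hx⟩ : (Ω \ closedBall a r).Nonempty := by
    rw [nonempty_iff_ne_empty, Ne, sdiff_eq_empty]
    intro h
    exact hne (subset_antisymm (interior_closedBall a hr ▸ interior_maximal h hΩ) hB)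
  exact ⟨x, Metric.isOpen_iff.1 (hΩ.sdiff isClosed_closedBall) x hx⟩

theorem one_sub_rpow_le_rpow_one_sub {x s : ℝ} (hx0 : 0 ≤ x) (hx1 : x ≤ 1) (hs0 : 0 ≤ s)
    (hs1 : s ≤ 1) : 1 - x ^ s ≤ (1 - x) ^ s := by
  have h := Real.rpow_add_le_add_rpow hx0 (sub_nonneg.2 hx1) hs0 hs1
  rw [add_sub_cancel, Real.one_rpow] at h
  linarith

theorem tendsto_sq_sub_div_sq_sub (a b : ℝ) :
    Tendsto (fun μ : ℝ => (μ ^ 2 - a) / (μ ^ 2 - b)) atTop (𝓝 1) := by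
  have h : Tendsto (fun μ : ℝ => (μ ^ 2)⁻¹) atTop (𝓝 0) :=
    tendsto_inv_atTop_zero.comp (tendsto_pow_atTop two_ne_zero)
  have h' : Tendsto (fun μ : ℝ => (1 - a * (μ ^ 2)⁻¹) / (1 - b * (μ ^ 2)⁻¹)) atTop
      (𝓝 ((1 - a * 0) / (1 - b * 0))) :=
    (tendsto_const_nhds.sub (h.const_mul a)).div (tendsto_const_nhds.sub (h.const_mul b)) (by simp)
  rw [mul_zero, mul_zero, sub_zero, div_one] at h'
  refine h'.congr' ?_
  filter_upwards [eventually_ne_atTop 0] with μ hμ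
  rw [← mul_div_mul_left _ _ (pow_ne_zero 2 hμ)]
  field_simp

theorem one_sub_rpow_div_le {s R μ d : ℝ} (hs0 : 0 ≤ s) (hs1 : s ≤ 1) (hR : 1 ≤ R)
    (hμ : 2 ≤ μ) (hRμ : R ≤ μ) (hdR : μ - R ≤ d) (hd1 : d ≤ μ - 1) :
    1 - (d * (2 + d) / (μ ^ 2 - 1)) ^ s ≤ (4 * (R - 1) / μ) ^ s := by
  have hμ1 : 0 < μ ^ 2 - 1 := by nlinarith
  have hx1 : d * (2 + d) / (μ ^ 2 - 1) ≤ 1 := by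
    rw [div_le_one hμ1]
    nlinarith
  refine (one_sub_rpow_le_rpow_one_sub (div_nonneg (by nlinarith) hμ1.le) hx1 hs0 hs1).trans
    (Real.rpow_le_rpow (by linarith) ?_ hs0)
  have hd : (μ - R) * (2 + (μ - R)) ≤ d * (2 + d) := by nlinarith
  rw [one_sub_div hμ1.ne', div_le_div_iff₀ hμ1 (by linarith)]
  nlinarith [mul_le_mul_of_nonneg_right hd (by linarith : (0 : ℝ) ≤ μ),
    mul_nonneg (sub_nonneg.2 hR) (by nlinarith : (0 : ℝ) ≤ 2 * μ ^ 2 + (R - 1) * μ - 4)]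

section Kernels

variable {n : ℕ} {c s : ℝ} {Ω : Set (En n)}

theorem poissonBall_zero_zero (R : ℝ) (q : En n) :
    poissonBall n c s 0 R 0 q = c * (R ^ 2) ^ s / (‖q‖ ^ (n : ℝ) * (‖q‖ ^ 2 - R ^ 2) ^ s) := by
  simp [poissonBall, mul_comm]

theorem poissonBall_zero_one_zero (q : En n) :
    poissonBall n c s 0 1 0 q = c / (‖q‖ ^ (n : ℝ) * (‖q‖ ^ 2 - 1) ^ s) := by
  simp [poissonBall_zero_zero]

theorem FOm_eq (y : En n) : FOm n c s Ω y =
    c / (‖y‖ ^ (n : ℝ) * (infDist y (frontier Ω) * (2 + infDist y (frontier Ω))) ^ s) := by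
  have hd := infDist_nonneg (x := y) (s := frontier Ω)
  rw [FOm, mul_assoc, Real.mul_rpow hd (by linarith)]

theorem FOm_eq_poissonBall {q : En n} (hq : infDist q (frontier Ω) = ‖q‖ - 1) :
    FOm n c s Ω q = poissonBall n c s 0 1 0 q := by
  rw [FOm_eq, poissonBall_zero_one_zero, hq, show (‖q‖ - 1) * (2 + (‖q‖ - 1)) = ‖q‖ ^ 2 - 1 by ring]

theorem poissonBall_eq_FOm_mul {q : En n} (hq : 1 < ‖q‖) (hd : 0 < infDist q (frontier Ω)) :
    poissonBall n c s 0 1 0 q = FOm n c s Ω q *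
      (infDist q (frontier Ω) * (2 + infDist q (frontier Ω)) / (‖q‖ ^ 2 - 1)) ^ s := by
  have hq2 : 0 < ‖q‖ ^ 2 - 1 := by nlinarith
  rw [FOm_eq, poissonBall_zero_one_zero, Real.div_rpow (by positivity) hq2.le]
  field_simp

theorem poissonBall_le_FOm (hc : 0 ≤ c) (hs : 0 ≤ s) {q : En n}
    (hd0 : 0 < infDist q (frontier Ω)) (hd1 : infDist q (frontier Ω) ≤ ‖q‖ - 1) :
    poissonBall n c s 0 1 0 q ≤ FOm n c s Ω q := by
  have hq : 0 < ‖q‖ := by linarith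
  rw [FOm_eq, poissonBall_zero_one_zero]
  gcongr
  nlinarith

theorem poissonBall_lt_FOm (hc : 0 < c) (hs : 0 < s) {q : En n}
    (hd0 : 0 < infDist q (frontier Ω)) (hd1 : infDist q (frontier Ω) < ‖q‖ - 1) :
    poissonBall n c s 0 1 0 q < FOm n c s Ω q := by
  have hq : 0 < ‖q‖ := by linarith
  rw [FOm_eq, poissonBall_zero_one_zero]
  gcongr
  nlinarith

theorem FOm_sub_poissonBall_le (hc : 0 ≤ c) (hs0 : 0 ≤ s) (hs1 : s ≤ 1) {R : ℝ} (hR : 1 ≤ R)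
    {q : En n} (hq : 2 ≤ ‖q‖) (hRq : R < ‖q‖) (hdR : ‖q‖ - R ≤ infDist q (frontier Ω))
    (hd1 : infDist q (frontier Ω) ≤ ‖q‖ - 1) :
    FOm n c s Ω q - poissonBall n c s 0 1 0 q ≤ FOm n c s Ω q * (4 * (R - 1) / ‖q‖) ^ s := by
  rw [poissonBall_eq_FOm_mul (by linarith) (by linarith), ← mul_one_sub]
  refine mul_le_mul_of_nonneg_left (one_sub_rpow_div_le hs0 hs1 hR hq hRq.le hdR hd1) ?_
  rw [FOm_eq]
  have := infDist_nonneg (x := q) (s := frontier Ω)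
  positivity

theorem mul_FOm_le (hc : 0 < c) (hs : 0 ≤ s) {κ cbar R : ℝ} (hκ : 0 ≤ κ) (hcbar : 0 ≤ cbar)
    (hR : 0 < R) {q : En n} (hRq : R ≤ ‖q‖) (hd : 0 < infDist q (frontier Ω)) :
    κ / (c * 2 ^ (n : ℝ) * (1 + cbar) ^ s) * FOm n c s Ω q ≤
      κ / ((R + ‖q‖) ^ (n : ℝ) * infDist q (frontier Ω) ^ s *
        (1 + cbar * infDist q (frontier Ω)) ^ s) := by
  rw [FOm]
  generalize infDist q (frontier Ω) = d at hd ⊢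
  have hq : 0 < ‖q‖ := hR.trans_le hRq
  have hrw : κ / (c * 2 ^ (n : ℝ) * (1 + cbar) ^ s) * (c / (‖q‖ ^ (n : ℝ) * d ^ s * (2 + d) ^ s)) =
      κ / ((2 * ‖q‖) ^ (n : ℝ) * d ^ s * ((1 + cbar) * (2 + d)) ^ s) := by
    rw [Real.mul_rpow (by norm_num) hq.le, Real.mul_rpow (by positivity) (by positivity)]
    field_simp
  have h1 : 0 < R + ‖q‖ := by linarith
  rw [hrw]
  gcongr
  · linarith
  · nlinarith

theorem div_le_poissonBall_zero_one_zero (hc : 0 ≤ c) (hs : 0 ≤ s) {R : ℝ} {y : En n}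
    (hy : 1 < ‖y‖) (hyR : ‖y‖ ≤ R) :
    c / (R ^ (n : ℝ) * (R ^ 2 - 1) ^ s) ≤ poissonBall n c s 0 1 0 y := by
  rw [poissonBall_zero_one_zero]
  have : 0 < ‖y‖ ^ 2 - 1 := by nlinarith
  have : 0 < R := by linarith
  gcongr

theorem le_setIntegral_mul_poissonBall {P : En n → En n → ℝ} {c₀ cbar R r : ℝ} (hc : 0 < c)
    (hs : 0 ≤ s) (hc₀ : 0 ≤ c₀) (hcbar : 0 ≤ cbar) (hΩ : MeasurableSet Ω) (hΩR : Ω ⊆ ball 0 R)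
    {x : En n} (hr : 0 < r)
    (hx : ball x (2 * r) ⊆ Ω \ closedBall 0 1) (hfr : (frontier Ω).Nonempty) {q : En n}
    (hqΩ : q ∉ closure Ω) (hd : 0 < infDist q (frontier Ω)) (hPnonneg : ∀ y ∈ Ω, 0 ≤ P y q)
    (hPlow : ∀ y ∈ Ω, c₀ * infDist y (frontier Ω) ^ s /
        (‖y - q‖ ^ (n : ℝ) * infDist q (frontier Ω) ^ s *
          (1 + cbar * infDist q (frontier Ω)) ^ s) ≤ P y q)
    (hint : IntegrableOn (fun y => P y q * poissonBall n c s 0 1 0 y) (Ω \ ball 0 1)) :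
    c₀ * r ^ s * (c / (R ^ (n : ℝ) * (R ^ 2 - 1) ^ s)) * volume.real (closedBall x r) /
        ((R + ‖q‖) ^ (n : ℝ) * infDist q (frontier Ω) ^ s *
          (1 + cbar * infDist q (frontier Ω)) ^ s) ≤
      ∫ y in Ω \ ball 0 1, P y q * poissonBall n c s 0 1 0 y := by
  set d := infDist q (frontier Ω)
  have hK : ∀ y ∈ closedBall x r, ball y r ⊆ Ω \ closedBall 0 1 := fun y hy =>
    (ball_subset_ball' (by linarith [mem_closedBall.1 hy])).trans hx
  have hKΩ : closedBall x r ⊆ Ω \ ball 0 1 := fun y hy =>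
    have hy := hK y hy (mem_ball_self hr)
    ⟨hy.1, fun h => hy.2 (ball_subset_closedBall h)⟩
  have hbound : ∀ y ∈ closedBall x r,
      c₀ * r ^ s / ((R + ‖q‖) ^ (n : ℝ) * d ^ s * (1 + cbar * d) ^ s) *
        (c / (R ^ (n : ℝ) * (R ^ 2 - 1) ^ s)) ≤ P y q * poissonBall n c s 0 1 0 y := by
    intro y hy
    have hyΩ : y ∈ Ω := (hKΩ hy).1
    have hy1 : 1 < ‖y‖ := by simpa using (hK y hy (mem_ball_self hr)).2
    have hyR : ‖y‖ < R := mem_ball_zero_iff.1 (hΩR hyΩ)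
    have hyq : 0 < ‖y - q‖ := norm_sub_pos_iff.2 fun h => hqΩ (h ▸ subset_closure hyΩ)
    have hyd : r ≤ infDist y (frontier Ω) :=
      le_infDist_frontier_of_ball_subset hfr ((hK y hy).trans sdiff_subset)
    have hyq' : ‖y - q‖ ≤ R + ‖q‖ := by linarith [norm_sub_le y q]
    have hyd0 : 0 ≤ infDist y (frontier Ω) := infDist_nonneg
    have hPy : c₀ * r ^ s / ((R + ‖q‖) ^ (n : ℝ) * d ^ s * (1 + cbar * d) ^ s) ≤ P y q := by
      refine le_trans ?_ (hPlow y hyΩ)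
      gcongr
    have hR : 0 < R := by linarith
    have hR2 : 0 < R ^ 2 - 1 := by nlinarith
    exact mul_le_mul hPy (div_le_poissonBall_zero_one_zero hc.le hs hy1 hyR.le) (by positivity)
      (hPnonneg y hyΩ)
  calc _ = c₀ * r ^ s / ((R + ‖q‖) ^ (n : ℝ) * d ^ s * (1 + cbar * d) ^ s) *
        (c / (R ^ (n : ℝ) * (R ^ 2 - 1) ^ s)) * volume.real (closedBall x r) := by ring
    _ ≤ ∫ y in closedBall x r, P y q * poissonBall n c s 0 1 0 y :=
      setIntegral_ge_of_const_le_real measurableSet_closedBall measure_closedBall_lt_top.ne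
        hbound (hint.mono_set hKΩ)
    _ ≤ ∫ y in Ω \ ball 0 1, P y q * poissonBall n c s 0 1 0 y := by
      refine setIntegral_mono_set hint ((ae_restrict_iff' (hΩ.diff measurableSet_ball)).2
        (ae_of_all _ fun y hy => mul_nonneg (hPnonneg y hy.1) ?_)) hKΩ.eventuallyLE
      have : 0 ≤ ‖y‖ ^ 2 - 1 := by nlinarith [not_lt.1 (mem_ball_zero_iff.not.1 hy.2)]
      rw [poissonBall_zero_one_zero]
      positivity

theorem frakc_mem_Ioc_of_infDist_eq {cΩ : ℝ} {P : En n → En n → ℝ} (hc : 0 < c) {q : En n}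
    (hq : 1 < ‖q‖) (hqd : infDist q (frontier Ω) = ‖q‖ - 1)
    (hmono : poissonBall n c s 0 1 0 q ≤ P 0 q)
    (hFP : FOm n c s Ω q = cΩ * P 0 q) : cΩ ∈ Ioc 0 1 := by
  have hpos : 0 < poissonBall n c s 0 1 0 q := by
    have : 0 < ‖q‖ ^ 2 - 1 := by nlinarith
    rw [poissonBall_zero_one_zero]
    positivity
  have hP : 0 < P 0 q := hpos.trans_le hmono
  have hkey : cΩ * P 0 q = poissonBall n c s 0 1 0 q := by rw [← hFP, FOm_eq_poissonBall hqd]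
  exact ⟨(mul_pos_iff_of_pos_right hP).1 (hkey ▸ hpos),
    le_of_mul_le_mul_right (by rw [hkey, one_mul]; exact hmono) hP⟩

theorem div_rpow_le_frakc_mul {cΩ R : ℝ} {P : En n → En n → ℝ} (hc : 0 < c) (hs : 0 ≤ s)
    (hR : 0 ≤ R) (hcΩ : 0 ≤ cΩ) {q : En n} (hRq : R < ‖q‖) (hd0 : 0 < infDist q (frontier Ω))
    (hd1 : infDist q (frontier Ω) ≤ ‖q‖ - 1) (hmono : P 0 q ≤ poissonBall n c s 0 R 0 q)
    (hFP : FOm n c s Ω q = cΩ * P 0 q) :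
    ((‖q‖ ^ 2 - R ^ 2) / (‖q‖ ^ 2 - 1)) ^ s ≤ cΩ * (R ^ 2) ^ s := by
  have h := (poissonBall_le_FOm hc.le hs hd0 hd1).trans
    (hFP.trans_le (mul_le_mul_of_nonneg_left hmono hcΩ))
  rw [poissonBall_zero_one_zero, poissonBall_zero_zero] at h
  have hA : 0 < ‖q‖ ^ (n : ℝ) := Real.rpow_pos_of_pos (by linarith) _
  have hB : 0 < (‖q‖ ^ 2 - 1) ^ s := Real.rpow_pos_of_pos (by nlinarith) _
  have hC : 0 < (‖q‖ ^ 2 - R ^ 2) ^ s := Real.rpow_pos_of_pos (by nlinarith) _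
  rw [Real.div_rpow (by nlinarith) (by nlinarith), div_le_iff₀ hB]
  field_simp at h
  nlinarith [mul_pos hc hA]

theorem rpow_neg_two_mul_le_frakc {cΩ R : ℝ} {P : En n → En n → ℝ} (hc : 0 < c) (hs : 0 ≤ s)
    (hR : 1 < R) (hΩR : Ω ⊆ ball 0 R) {p : En n} (hp : p ∈ frontier Ω) (hp1 : ‖p‖ = 1)
    (hcΩ : 0 ≤ cΩ) (hmono : ∀ q : En n, R < ‖q‖ → P 0 q ≤ poissonBall n c s 0 R 0 q)
    (hFP : ∀ q ∉ closure Ω, FOm n c s Ω q = cΩ * P 0 q) : R ^ (-(2 * s)) ≤ cΩ := by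
  have hclosR : closure Ω ⊆ closedBall 0 R :=
    closure_minimal (hΩR.trans ball_subset_closedBall) isClosed_closedBall
  have hbound : ∀ μ, R < μ → ((μ ^ 2 - R ^ 2) / (μ ^ 2 - 1)) ^ s ≤ cΩ * (R ^ 2) ^ s := by
    intro μ hμ
    have hq : ‖μ • p‖ = μ := by rw [norm_smul, hp1, mul_one, Real.norm_of_nonneg (by linarith)]
    have hqΩ : μ • p ∉ closure Ω := fun h => by
      linarith [mem_closedBall_zero_iff.1 (hclosR h)]
    have hdR := sub_le_infDist_of_subset_closedBall ⟨p, hp⟩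
      (frontier_subset_closure.trans hclosR) (μ • p)
    have hd1 : infDist (μ • p) (frontier Ω) ≤ ‖μ • p‖ - 1 := by
      refine (infDist_le_dist_of_mem hp).trans_eq ?_
      rw [hq, dist_eq_norm, show μ • p - p = (μ - 1) • p by rw [sub_smul, one_smul], norm_smul,
        hp1, mul_one, Real.norm_of_nonneg (by linarith)]
    rw [← hq]
    exact div_rpow_le_frakc_mul hc hs (by linarith) hcΩ (by rwa [hq]) (by linarith) hd1
      (hmono _ (by rwa [hq])) (hFP _ hqΩ)
  have hlim : Tendsto (fun μ : ℝ => ((μ ^ 2 - R ^ 2) / (μ ^ 2 - 1)) ^ s) atTop (𝓝 1) := by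
    simpa using (tendsto_sq_sub_div_sq_sub (R ^ 2) 1).rpow_const (Or.inl one_ne_zero)
  have h1 : 1 ≤ cΩ * (R ^ 2) ^ s :=
    le_of_tendsto hlim ((eventually_gt_atTop R).mono hbound)
  rw [Real.rpow_neg (by linarith), Real.rpow_mul (by linarith),
    inv_le_iff_one_le_mul₀ (by positivity)]
  simpa [mul_comm] using h1

theorem frakc_ball_eq_one
    (hnorm : c * ∫ y in (ball (0 : En n) 1)ᶜ, ((‖y‖ ^ 2 - 1) ^ s * ‖y‖ ^ (n : ℝ))⁻¹ = 1) :
    ∫ y in (ball (0 : En n) 1)ᶜ, FOm n c s (ball 0 1) y = 1 := by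
  rw [← integral_const_mul] at hnorm
  refine (setIntegral_congr_fun measurableSet_ball.compl fun y hy => ?_).trans hnorm
  have hy1 : 1 ≤ ‖y‖ := by simpa using hy
  rw [FOm_eq_poissonBall
      (by rw [frontier_ball (0 : En n) one_ne_zero, infDist_sphere_zero one_pos hy1]),
    poissonBall_zero_one_zero, div_eq_mul_inv, mul_comm (‖y‖ ^ (n : ℝ))]

theorem le_rpow_of_FOm_sub_poissonBall_eq {P : En n → En n → ℝ} {c₀ cbar R r : ℝ} (hc : 0 < c)
    (hs0 : 0 < s) (hs1 : s ≤ 1) (hc₀ : 0 ≤ c₀) (hcbar : 0 ≤ cbar) (hR : 1 < R)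
    (hΩ : MeasurableSet Ω) (hΩR : Ω ⊆ ball 0 R) {x : En n} (hr : 0 < r)
    (hx : ball x (2 * r) ⊆ Ω \ closedBall 0 1) (hfr : (frontier Ω).Nonempty) {q : En n}
    (hqΩ : q ∉ closure Ω) (hq2 : 2 ≤ ‖q‖) (hRq : R < ‖q‖)
    (hdR : ‖q‖ - R ≤ infDist q (frontier Ω)) (hd1 : infDist q (frontier Ω) < ‖q‖ - 1)
    (hPnonneg : ∀ y ∈ Ω, 0 ≤ P y q)
    (hPlow : ∀ y ∈ Ω, c₀ * infDist y (frontier Ω) ^ s /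
        (‖y - q‖ ^ (n : ℝ) * infDist q (frontier Ω) ^ s *
          (1 + cbar * infDist q (frontier Ω)) ^ s) ≤ P y q)
    (hexcess : FOm n c s Ω q - poissonBall n c s 0 1 0 q =
      ∫ y in Ω \ ball 0 1, P y q * poissonBall n c s 0 1 0 y) :
    c₀ * r ^ s * (c / (R ^ (n : ℝ) * (R ^ 2 - 1) ^ s)) * volume.real (closedBall x r) /
        (c * 2 ^ (n : ℝ) * (1 + cbar) ^ s) ≤ (4 * (R - 1) / ‖q‖) ^ s := by
  have hd0 : 0 < infDist q (frontier Ω) := by linarith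
  -- an integral with the junk value 0 would force `FOm = poissonBall` at `q`
  have hint : IntegrableOn (fun y => P y q * poissonBall n c s 0 1 0 y) (Ω \ ball 0 1) := by
    by_contra h
    rw [integral_undef h] at hexcess
    linarith [poissonBall_lt_FOm hc hs0 hd0 hd1]
  have hF : 0 < FOm n c s Ω q := by
    have : 0 < ‖q‖ := by linarith
    rw [FOm_eq]
    positivity
  have hR2 : 0 < R ^ 2 - 1 := by nlinarith
  have hκ : 0 ≤ c₀ * r ^ s * (c / (R ^ (n : ℝ) * (R ^ 2 - 1) ^ s)) *
      volume.real (closedBall x r) := by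
    have : 0 < R := by linarith
    positivity
  refine le_of_mul_le_mul_right ?_ hF
  calc _ ≤ _ := mul_FOm_le hc hs0.le hκ hcbar (by linarith) hRq.le hd0
    _ ≤ _ := le_setIntegral_mul_poissonBall hc hs0.le hc₀ hcbar hΩ hΩR hr hx hfr hqΩ hd0
        hPnonneg hPlow hint
    _ = _ := hexcess.symm
    _ ≤ _ := FOm_sub_poissonBall_le hc.le hs0.le hs1 hR.le hq2 hRq hdR hd1.le
    _ = _ := mul_comm _ _

theorem eq_ball_of_FOm_eq {P : En n → En n → ℝ} {c₀ cbar R : ℝ} (hc : 0 < c) (hs0 : 0 < s)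
    (hs1 : s ≤ 1) (hc₀ : 0 < c₀) (hcbar : 0 ≤ cbar) (hR : 1 < R) (hΩ : IsOpen Ω)
    (hB1 : ball 0 1 ⊆ Ω) (hΩR : Ω ⊆ ball 0 R) (hPnonneg : ∀ x ∈ Ω, ∀ q ∉ closure Ω, 0 ≤ P x q)
    (hPid : ∀ q ∉ closure Ω, P 0 q = poissonBall n c s 0 1 0 q +
      ∫ y in Ω \ ball (0 : En n) 1, P y q * poissonBall n c s 0 1 0 y)
    (hPlow : ∀ y ∈ Ω, ∀ q ∉ closure Ω,
      c₀ * (infDist y (frontier Ω)) ^ s /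
        (‖y - q‖ ^ (n : ℝ) * (infDist q (frontier Ω)) ^ s *
          (1 + cbar * infDist q (frontier Ω)) ^ s) ≤ P y q)
    (hFP : ∀ q ∉ closure Ω, FOm n c s Ω q = P 0 q) : Ω = ball 0 1 := by
  by_contra hne
  obtain ⟨x, ε, hε, hxε⟩ := exists_ball_subset_diff_closedBall one_ne_zero hΩ hB1 hne
  have hxΩ : x ∈ Ω := (hxε (mem_ball_self hε)).1
  have hx1 : 1 < ‖x‖ := by simpa using (hxε (mem_ball_self hε)).2
  have hxR : ‖x‖ < R := mem_ball_zero_iff.1 (hΩR hxΩ)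
  have hclosR : closure Ω ⊆ closedBall 0 R :=
    closure_minimal (hΩR.trans ball_subset_closedBall) isClosed_closedBall
  set κ := c₀ * (ε / 2) ^ s * (c / (R ^ (n : ℝ) * (R ^ 2 - 1) ^ s)) *
    volume.real (closedBall x (ε / 2)) / (c * 2 ^ (n : ℝ) * (1 + cbar) ^ s)
  have hκ : 0 < κ := by
    have : 0 < R ^ 2 - 1 := by nlinarith
    have : 0 < volume.real (closedBall x (ε / 2)) := ENNReal.toReal_pos
      (measure_closedBall_pos _ x (by positivity)).ne' measure_closedBall_lt_top.ne
    positivity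
  have key : ∀ μ, max R 2 < μ → κ ≤ (4 * (R - 1) / μ) ^ s := by
    intro μ hμ
    obtain ⟨hRμ, h2μ⟩ := max_lt_iff.1 hμ
    set q := (μ / ‖x‖) • x
    have hq : ‖q‖ = μ := by
      rw [norm_smul, Real.norm_of_nonneg (by positivity), div_mul_cancel₀ _ (by positivity)]
    have hqΩ : q ∉ closure Ω := fun h => by linarith [mem_closedBall_zero_iff.1 (hclosR h)]
    obtain ⟨z, hz, hzq⟩ := exists_mem_frontier_dist_le hxΩ fun h => hqΩ (subset_closure h)
    have hqx : dist q x = μ - ‖x‖ := by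
      rw [dist_eq_norm, show q - x = (μ / ‖x‖ - 1) • x by rw [sub_smul, one_smul], norm_smul,
        Real.norm_of_nonneg (by rw [sub_nonneg, one_le_div (by positivity)]; linarith), sub_mul,
        div_mul_cancel₀ _ (by positivity), one_mul]
    rw [← hq]
    refine le_rpow_of_FOm_sub_poissonBall_eq hc hs0 hs1 hc₀.le hcbar hR hΩ.measurableSet hΩR
      (half_pos hε) (by rwa [mul_div_cancel₀ _ two_ne_zero]) ⟨z, hz⟩ hqΩ (by linarith)
      (by linarith) ?_ ?_ (fun y hy => hPnonneg y hy q hqΩ) (fun y hy => hPlow y hy q hqΩ)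
      (by linarith [hPid q hqΩ, hFP q hqΩ])
    · exact sub_le_infDist_of_subset_closedBall ⟨z, hz⟩ (frontier_subset_closure.trans hclosR) q
    · linarith [infDist_le_dist_of_mem hz (x := q)]
  have hlim : Tendsto (fun μ : ℝ => (4 * (R - 1) / μ) ^ s) atTop (𝓝 0) := by
    simpa [Real.zero_rpow hs0.ne'] using
      (tendsto_const_nhds.div_atTop tendsto_id).rpow_const (Or.inr hs0.le)
  exact (ge_of_tendsto hlim ((eventually_gt_atTop _).mono key)).not_gt hκ

end Kernels

theorem frakc_bounds_and_rigidity_general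
    (n : ℕ) (s : ℝ) (hs : s ∈ Ioo (0 : ℝ) 1)
    (c : ℝ) (hc : 0 < c)
    (hnorm : c * ∫ y in (ball (0 : En n) 1)ᶜ, ((‖y‖ ^ 2 - 1) ^ s * ‖y‖ ^ (n : ℝ))⁻¹ = 1)
    (R : ℝ) (hR : 1 < R)
    (Ω : Set (En n)) (hΩopen : IsOpen Ω)
    (hB1 : ball (0 : En n) 1 ⊆ Ω) (hΩR : Ω ⊆ ball (0 : En n) R)
    (p : En n) (hp : p ∈ frontier Ω ∩ sphere (0 : En n) 1)
    (t₀ : ℝ) (ht₀ : 0 < t₀)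
    (hq : ∀ t ∈ Ioo (0 : ℝ) t₀,
      (1 + t) • p ∉ closure Ω ∧ infDist ((1 + t) • p) (frontier Ω) = t)
    (cΩ : ℝ) (hcΩ : cΩ = ∫ y in Ωᶜ, FOm n c s Ω y)
    (P : En n → En n → ℝ)
    (hPnonneg : ∀ x ∈ Ω, ∀ q ∉ closure Ω, 0 ≤ P x q)
    -- (i) kernel identity from the Poisson representation in B₁
    (hPid : ∀ q ∉ closure Ω, P 0 q = poissonBall n c s 0 1 0 q +
      ∫ y in Ω \ ball (0 : En n) 1, P y q * poissonBall n c s 0 1 0 y)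
    -- (ii) Chen–Song lower bound
    (c₀ cbar : ℝ) (hc₀ : 0 < c₀) (hcbar : 0 < cbar)
    (hPlow : ∀ y ∈ Ω, ∀ q ∉ closure Ω,
      c₀ * (infDist y (frontier Ω)) ^ s /
        (‖y - q‖ ^ (n : ℝ) * (infDist q (frontier Ω)) ^ s *
          (1 + cbar * infDist q (frontier Ω)) ^ s) ≤ P y q)
    -- (iii) monotonicity of the Poisson kernel with respect to set inclusion
    (hmono₁ : ∀ q ∉ closure Ω, poissonBall n c s 0 1 0 q ≤ P 0 q)
    (hmono₂ : ∀ q : En n, R < ‖q‖ → P 0 q ≤ poissonBall n c s 0 R 0 q)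
    -- the identity derived from the mean value hypothesis
    (hFP : ∀ q ∉ closure Ω, FOm n c s Ω q = cΩ * P 0 q) :
    (R ^ (-(2 * s)) ≤ cΩ ∧ cΩ ≤ 1) ∧ (cΩ = 1 ↔ Ω = ball 0 1) := by
  obtain ⟨hs0, hs1⟩ := hs
  have hp1 : ‖p‖ = 1 := mem_sphere_zero_iff_norm.1 hp.2
  obtain ⟨hqΩ, hqd⟩ := hq (t₀ / 2) ⟨half_pos ht₀, half_lt_self ht₀⟩
  have hq_norm : ‖(1 + t₀ / 2) • p‖ = 1 + t₀ / 2 := by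
    rw [norm_smul, hp1, mul_one, Real.norm_of_nonneg (by positivity)]
  obtain ⟨hcΩ0, hcΩ1⟩ := frakc_mem_Ioc_of_infDist_eq hc (by rw [hq_norm]; linarith)
    (by rw [hqd, hq_norm]; ring) (hmono₁ _ hqΩ) (hFP _ hqΩ)
  refine ⟨⟨rpow_neg_two_mul_le_frakc hc hs0.le hR hΩR hp.1 hp1 hcΩ0.le hmono₂ hFP, hcΩ1⟩,
    fun hcΩ_one => ?_, fun hΩ => ?_⟩
  · refine eq_ball_of_FOm_eq hc hs0 hs1.le hc₀ hcbar.le hR hΩopen hB1 hΩR hPnonneg hPid hPlow ?_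
    intro q hq
    rw [hFP q hq, hcΩ_one, one_mul]
  · subst hΩ
    rw [hcΩ]
    exact frakc_ball_eq_one hnorm

/-- conditional form of Lemma 1.8 of the paper: with
`𝔠(Ω) = ∫_{𝒞Ω} F_Ω` and `F_Ω = 𝔠(Ω) P_Ω(0,·)` outside `closure Ω`, one has
`𝔠(Ω) ∈ [R^{−2s}, 1]`, and `𝔠(Ω) = 1` if and only if `Ω = B_1`. -/
theorem frakc_bounds_and_rigidity
    (n : ℕ) (hn : 1 ≤ n) (s : ℝ) (hs : s ∈ Ioo (0 : ℝ) 1)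
    (c : ℝ) (hc : 0 < c)
    (hnorm : c * ∫ y in (ball (0 : En n) 1)ᶜ, ((‖y‖ ^ 2 - 1) ^ s * ‖y‖ ^ (n : ℝ))⁻¹ = 1)
    (R : ℝ) (hR : 1 < R)
    (Ω : Set (En n)) (hΩopen : IsOpen Ω) (hΩbd : Bornology.IsBounded Ω)
    (hB1 : ball (0 : En n) 1 ⊆ Ω) (hΩR : Ω ⊆ ball (0 : En n) R)
    (hdist : infDist 0 (frontier Ω) = 1)
    (p : En n) (hp : p ∈ frontier Ω ∩ sphere (0 : En n) 1)
    (t₀ : ℝ) (ht₀ : 0 < t₀)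
    (hq : ∀ t ∈ Ioo (0 : ℝ) t₀,
      (1 + t) • p ∉ closure Ω ∧ infDist ((1 + t) • p) (frontier Ω) = t)
    (cΩ : ℝ) (hcΩ : cΩ = ∫ y in Ωᶜ, FOm n c s Ω y)
    (P : En n → En n → ℝ)
    (hPnonneg : ∀ x ∈ Ω, ∀ q ∉ closure Ω, 0 ≤ P x q)
    -- (i) kernel identity from the Poisson representation in B₁
    (hPid : ∀ q ∉ closure Ω, P 0 q = poissonBall n c s 0 1 0 q +
      ∫ y in Ω \ ball (0 : En n) 1, P y q * poissonBall n c s 0 1 0 y)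
    -- (ii) Chen–Song lower bound
    (c₀ cbar : ℝ) (hc₀ : 0 < c₀) (hcbar : 0 < cbar)
    (hPlow : ∀ y ∈ Ω, ∀ q ∉ closure Ω,
      c₀ * (infDist y (frontier Ω)) ^ s /
        (‖y - q‖ ^ (n : ℝ) * (infDist q (frontier Ω)) ^ s *
          (1 + cbar * infDist q (frontier Ω)) ^ s) ≤ P y q)
    -- (iii) monotonicity of the Poisson kernel with respect to set inclusion
    (hmono₁ : ∀ q ∉ closure Ω, poissonBall n c s 0 1 0 q ≤ P 0 q)
    (hmono₂ : ∀ q : En n, R < ‖q‖ → P 0 q ≤ poissonBall n c s 0 R 0 q)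
    -- the identity derived from the mean value hypothesis
    (hFP : ∀ q ∉ closure Ω, FOm n c s Ω q = cΩ * P 0 q) :
    (R ^ (-(2 * s)) ≤ cΩ ∧ cΩ ≤ 1) ∧ (cΩ = 1 ↔ Ω = ball 0 1) :=
  frakc_bounds_and_rigidity_general n s hs c hc hnorm R hR Ω hΩopen hB1 hΩR p hp t₀ ht₀ hq cΩ hcΩ P
    hPnonneg hPid c₀ cbar hc₀ hcbar hPlow hmono₁ hmono₂ hFP

end
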